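/- For m ≥ 5, let H = K_{m,m} \ E(C_{2m}). Any subset S ⊆ V(H) with |S| ≥ 2 satisfying: (i) every gap has at most 4 vertices; (ii) at most one gap has 4 vertices; (iii) any gap with at least 2 vertices has both neighboring gaps of size at most 1; (iv) any two gaps of exactly 3 vertices have middle vertices in different parts; (v) not both a 3-gap and a 4-gap occur; is a resolving set of H. -/

import Mathlib

/-- `W` resolves `G`: every vertex is determined by its distance vector to `W`. -/
def Resolves {V : Type*} (G : SimpleGraph V) (W : Set V) : Prop :=
  ∀ u v : V, (∀ w ∈ W, G.dist u w = G.dist v w) → u = v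

/-- Metric dimension: minimum cardinality of a (finite) resolving set. -/
noncomputable def metricDim {V : Type*} (G : SimpleGraph V) : ℕ :=
  sInf {k | ∃ W : Set V, W.Finite ∧ W.ncard = k ∧ Resolves G W}
/-- `K_{m,m}` minus the Hamiltonian cycle `x₁ y₁ x₂ y₂ … x_m y_m x₁` (0-indexed:
cycle edges are `xᵢ yᵢ` and `yᵢ x_{i+1 mod m}`). -/
def cycGraph (m : ℕ) : SimpleGraph (Fin m ⊕ Fin m) where
  Adj u v := match u, v with
    | Sum.inl i, Sum.inr j => j ≠ i ∧ (i : ℕ) ≠ ((j : ℕ) + 1) % m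
    | Sum.inr j, Sum.inl i => j ≠ i ∧ (i : ℕ) ≠ ((j : ℕ) + 1) % m
    | _, _ => False
  symm := ⟨by rintro (i|i) (j|j) h <;> exact h⟩
  loopless := ⟨by rintro (i|i) h <;> exact h⟩

/-- Position `k` (taken mod `2m`) along the Hamiltonian cycle
`x₁ y₁ x₂ y₂ …`: even positions `2i ↦ xᵢ`, odd positions `2i+1 ↦ yᵢ`. -/
def cyc (m : ℕ) [NeZero m] (k : ℕ) : Fin m ⊕ Fin m :=
  if (k % (2 * m)) % 2 = 0 then
    Sum.inl ⟨k % (2 * m) / 2, by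
      have hm : 0 < m := Nat.pos_of_ne_zero (NeZero.ne m)
      have h : k % (2 * m) < 2 * m := Nat.mod_lt _ (by omega)
      exact Nat.div_lt_of_lt_mul (by omega)⟩
  else
    Sum.inr ⟨k % (2 * m) / 2, by
      have hm : 0 < m := Nat.pos_of_ne_zero (NeZero.ne m)
      have h : k % (2 * m) < 2 * m := Nat.mod_lt _ (by omega)
      exact Nat.div_lt_of_lt_mul (by omega)⟩

/-- `W` has a gap of exactly `L` vertices starting at cycle position `s`:
the positions `s` and `s+L+1` are in `W` and the `L` positions strictly between are not. -/
def IsGap (m : ℕ) [NeZero m] (W : Set (Fin m ⊕ Fin m)) (s L : ℕ) : Prop :=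
  cyc m s ∈ W ∧ cyc m (s + L + 1) ∈ W ∧ ∀ t, 1 ≤ t → t ≤ L → cyc m (s + t) ∉ W

/-!
`H` is bipartite with the two sides as parts, and connected for `m ≥ 5` (two vertices of the same
part have a common neighbour). So the parity of `dist u w` tells whether `u` and `w` lie in the
same part, and `dist u w = 1` says that they lie in different parts and are not adjacent on the
cycle `C_{2m}`. Hence two distinct vertices that `S` does not resolve lie outside `S`, in the same
part, and have the same cycle neighbours in `S`. If they have a common cycle neighbour `c ∈ S`,
then `c` follows one of them and precedes the other, so the gaps ending and starting at `c` both
have at least two vertices, against (iii). Otherwise both are inner vertices of gaps, which by (i)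
have 3 or 4 vertices; then (ii), (iv), (v), and the fact that the two inner vertices of a 4-gap
lie in different parts, force them to coincide.
-/

open Sum

section

variable {m : ℕ} [NeZero m]

def cycPos : Fin m ⊕ Fin m → ℕ
  | inl i => 2 * i
  | inr i => 2 * i + 1

omit [NeZero m] in
lemma cycPos_lt (u : Fin m ⊕ Fin m) : cycPos u < 2 * m := by
  cases u <;> simp only [cycPos] <;> omega

lemma cyc_eq_iff_mod {k : ℕ} {u : Fin m ⊕ Fin m} : cyc m k = u ↔ k % (2 * m) = cycPos u := by
  unfold cyc
  split_ifs <;> cases u <;> simp [cycPos, Fin.ext_iff] <;> omega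

@[simp] lemma cyc_cycPos (u : Fin m ⊕ Fin m) : cyc m (cycPos u) = u :=
  cyc_eq_iff_mod.2 (Nat.mod_eq_of_lt (cycPos_lt u))

lemma cyc_eq_cyc_iff_modEq {a b : ℕ} : cyc m a = cyc m b ↔ a ≡ b [MOD 2 * m] := by
  rw [cyc_eq_iff_mod, ← cyc_eq_iff_mod.1 rfl]
  rfl

lemma cyc_eq_cyc_iff {a b : ℕ} : cyc m a = cyc m b ↔ (a : ZMod (2 * m)) = b := by
  rw [cyc_eq_cyc_iff_modEq, ZMod.natCast_eq_natCast_iff]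

lemma natCast_cycPos_cyc (k : ℕ) : (cycPos (cyc m k) : ZMod (2 * m)) = k := by
  rw [← cyc_eq_cyc_iff, cyc_cycPos]

omit [NeZero m] in
lemma natCast_add_two_mul (a : ℕ) : ((a + 2 * m : ℕ) : ZMod (2 * m)) = a := by
  rw [Nat.cast_add, ZMod.natCast_self, add_zero]

-- Positions live in `ℕ`; the predecessor of position `a` is `a + 2 * m - 1`, which avoids
-- truncated subtraction.
lemma natCast_pred (a : ℕ) : ((a + 2 * m - 1 : ℕ) : ZMod (2 * m)) = a - 1 := by
  rw [Nat.cast_sub (by have := NeZero.pos m; omega), natCast_add_two_mul, Nat.cast_one]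

omit [NeZero m] in
lemma natCast_ne_zero {k : ℕ} (h0 : 0 < k) (hk : k < 2 * m) : (k : ZMod (2 * m)) ≠ 0 := by
  rw [Ne, ZMod.natCast_eq_zero_iff]
  exact fun h => absurd (Nat.le_of_dvd h0 h) (by omega)

lemma cyc_add_two_mul (a : ℕ) : cyc m (a + 2 * m) = cyc m a := by
  rw [cyc_eq_cyc_iff, natCast_add_two_mul]

def cycSucc (u : Fin m ⊕ Fin m) : Fin m ⊕ Fin m := cyc m (cycPos u + 1)

lemma cycSucc_cyc (k : ℕ) : cycSucc (cyc m k) = cyc m (k + 1) := by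
  rw [cycSucc, cyc_eq_cyc_iff]; push_cast [natCast_cycPos_cyc]; rfl

lemma cycSucc_inl (i : Fin m) : cycSucc (inl i) = inr i :=
  cyc_cycPos (inr i)

lemma cycSucc_inr (i : Fin m) : cycSucc (inr i) = inl (i + 1) := by
  rw [cycSucc, cyc_eq_iff_mod]
  simp only [cycPos, Fin.val_add, Fin.val_one', Nat.add_mod_mod]
  rw [← Nat.mul_mod_mul_left, show 2 * (i : ℕ) + 1 + 1 = 2 * ((i : ℕ) + 1) by ring]

lemma isLeft_cycSucc (u : Fin m ⊕ Fin m) : (cycSucc u).isLeft = !u.isLeft := by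
  cases u <;> simp [cycSucc_inl, cycSucc_inr]

lemma isLeft_cyc_succ (k : ℕ) : (cyc m (k + 1)).isLeft = !(cyc m k).isLeft := by
  rw [← cycSucc_cyc, isLeft_cycSucc]

def IsCycAdj (u v : Fin m ⊕ Fin m) : Prop := v = cycSucc u ∨ u = cycSucc v

lemma IsCycAdj.isLeft_ne {u v : Fin m ⊕ Fin m} (h : IsCycAdj u v) : u.isLeft ≠ v.isLeft := by
  rcases h with rfl | rfl <;> simp only [isLeft_cycSucc, Bool.self_ne_not, Bool.not_ne_self, ne_eq,
    not_false_eq_true]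

lemma cycGraph_adj_iff {u v : Fin m ⊕ Fin m} :
    (cycGraph m).Adj u v ↔ u.isLeft ≠ v.isLeft ∧ ¬ IsCycAdj u v := by
  cases u <;> cases v <;>
    simp [cycGraph, IsCycAdj, cycSucc_inl, cycSucc_inr, Fin.ext_iff, Fin.val_add, eq_comm, and_comm]

lemma cyc_eq_cycSucc_iff {a : ℕ} {w : Fin m ⊕ Fin m} :
    cyc m a = cycSucc w ↔ w = cyc m (a + 2 * m - 1) := by
  conv_rhs => rw [← cyc_cycPos w]
  rw [cycSucc, cyc_eq_cyc_iff, cyc_eq_cyc_iff, natCast_pred]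
  push_cast
  constructor <;> intro h <;> linear_combination -h

lemma isCycAdj_cyc_iff {a : ℕ} {w : Fin m ⊕ Fin m} :
    IsCycAdj (cyc m a) w ↔ w = cyc m (a + 1) ∨ w = cyc m (a + 2 * m - 1) := by
  rw [IsCycAdj, cycSucc_cyc, cyc_eq_cycSucc_iff]

lemma exists_cycGraph_adj_adj (hm : 5 ≤ m) {u v : Fin m ⊕ Fin m} (h : u.isLeft = v.isLeft) :
    ∃ w, (cycGraph m).Adj u w ∧ (cycGraph m).Adj v w := by
  classical
  obtain ⟨i, rfl | rfl⟩ : ∃ i, u = inl i ∨ u = inr i := by cases u <;> simp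
  all_goals obtain ⟨j, rfl | rfl⟩ : ∃ j, v = inl j ∨ v = inr j := by cases v <;> simp
  all_goals simp only [isLeft_inl, isLeft_inr, reduceCtorEq] at h
  · obtain ⟨k, -, hk⟩ := Finset.exists_mem_notMem_of_card_lt_card
      (s := {i, j, i - 1, j - 1}) (t := Finset.univ)
      (by simpa using Finset.card_le_four.trans_lt hm)
    refine ⟨inr k, ?_, ?_⟩ <;>
      simp_all [cycGraph_adj_iff, IsCycAdj, cycSucc_inl, cycSucc_inr, ← sub_eq_iff_eq_add,
        eq_comm]
  · obtain ⟨k, -, hk⟩ := Finset.exists_mem_notMem_of_card_lt_card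
      (s := {i, j, i + 1, j + 1}) (t := Finset.univ)
      (by simpa using Finset.card_le_four.trans_lt hm)
    refine ⟨inl k, ?_, ?_⟩ <;>
      simp_all [cycGraph_adj_iff, IsCycAdj, cycSucc_inl, cycSucc_inr, eq_comm]

lemma cycGraph_connected (hm : 5 ≤ m) : (cycGraph m).Connected where
  preconnected u v := by
    by_cases h : u.isLeft = v.isLeft
    · obtain ⟨w, hu, hv⟩ := exists_cycGraph_adj_adj hm h
      exact hu.reachable.trans hv.reachable.symm
    · obtain ⟨w, hu, -⟩ := exists_cycGraph_adj_adj hm (v := u) rfl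
      have hw : w.isLeft = v.isLeft := by
        have := (cycGraph_adj_iff.1 hu).1
        revert h this; cases u.isLeft <;> cases w.isLeft <;> cases v.isLeft <;> simp
      obtain ⟨x, hwx, hvx⟩ := exists_cycGraph_adj_adj hm hw
      exact hu.reachable.trans (hwx.reachable.trans hvx.reachable.symm)

def isLeftColoring : (cycGraph m).Coloring Bool :=
  SimpleGraph.Coloring.mk Sum.isLeft fun h => (cycGraph_adj_iff.1 h).1

lemma cycGraph_even_dist_iff {u v : Fin m ⊕ Fin m} (h : (cycGraph m).Reachable u v) :
    Even ((cycGraph m).dist u v) ↔ u.isLeft = v.isLeft := by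
  obtain ⟨p, hp⟩ := h.exists_walk_length_eq_dist
  rw [← hp]
  exact (isLeftColoring.even_length_iff_congr p).trans Bool.eq_iff_iff.symm

lemma isLeft_eq_of_dist_eq (hconn : (cycGraph m).Connected) {u v w : Fin m ⊕ Fin m}
    (h : (cycGraph m).dist u w = (cycGraph m).dist v w) : u.isLeft = v.isLeft := by
  have := (cycGraph_even_dist_iff (hconn u w)).symm.trans (h ▸ cycGraph_even_dist_iff (hconn v w))
  revert this
  cases u.isLeft <;> cases v.isLeft <;> cases w.isLeft <;> decide

lemma isCycAdj_iff_of_dist_eq {u v w : Fin m ⊕ Fin m} (hpart : u.isLeft = v.isLeft)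
    (h : (cycGraph m).dist u w = (cycGraph m).dist v w) : IsCycAdj u w ↔ IsCycAdj v w := by
  have hadj : (cycGraph m).Adj u w ↔ (cycGraph m).Adj v w := by
    rw [← SimpleGraph.dist_eq_one_iff_adj, ← SimpleGraph.dist_eq_one_iff_adj, h]
  by_cases hw : u.isLeft = w.isLeft
  · exact iff_of_false (fun h' => h'.isLeft_ne hw) (fun h' => h'.isLeft_ne (hpart ▸ hw))
  · exact not_iff_not.1 (by simpa [cycGraph_adj_iff, hw, ← hpart] using hadj)

lemma cyc_add_congr {a b : ℕ} (h : cyc m a = cyc m b) (k : ℕ) :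
    cyc m (a + k) = cyc m (b + k) := by
  rw [cyc_eq_cyc_iff] at h ⊢; push_cast; rw [h]

variable {S : Set (Fin m ⊕ Fin m)}

lemma IsGap.mem_iff {s L t : ℕ} (hg : IsGap m S s L) (ht : t ≤ L + 1) :
    cyc m (s + t) ∈ S ↔ t = 0 ∨ t = L + 1 := by
  rcases Nat.eq_zero_or_pos t with rfl | ht0
  · simpa using hg.1
  rcases eq_or_lt_of_le ht with rfl | htL
  · simpa [← add_assoc] using hg.2.1
  · simpa [ht0.ne', htL.ne] using hg.2.2 t ht0 (by omega)

lemma exists_isGap {s : ℕ} (hs : cyc m s ∈ S) : ∃ L, IsGap m S s L := by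
  classical
  have hex : ∃ t, 0 < t ∧ cyc m (s + t) ∈ S :=
    ⟨2 * m, by have := NeZero.pos m; omega, by rwa [cyc_add_two_mul]⟩
  obtain ⟨ht0, htS⟩ := Nat.find_spec hex
  refine ⟨Nat.find hex - 1, hs, ?_,
    fun t ht1 ht2 htS' => Nat.find_min hex (by omega) ⟨ht1, htS'⟩⟩
  rwa [show s + (Nat.find hex - 1) + 1 = s + Nat.find hex by omega]

lemma exists_isGap_through (hS : S.Nonempty) {a : ℕ} (ha : cyc m a ∉ S) :
    ∃ s L B, IsGap m S s L ∧ 0 < B ∧ B ≤ L ∧ s + B = a + 2 * m := by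
  classical
  obtain ⟨w, hw⟩ := hS
  have hex : ∃ B, 0 < B ∧ B ≤ 2 * m ∧ cyc m (a + 2 * m - B) ∈ S := by
    set B := ((a : ZMod (2 * m)) - cycPos w).val
    have hB : B < 2 * m := ZMod.val_lt _
    have hBw : cyc m (a + 2 * m - B) = w := by
      rw [← cyc_cycPos w, cyc_eq_cyc_iff, Nat.cast_sub (by omega), natCast_add_two_mul,
        ZMod.natCast_zmod_val, sub_sub_cancel]
    refine ⟨B, Nat.pos_of_ne_zero fun h0 => ha ?_, hB.le, hBw ▸ hw⟩
    rw [h0, Nat.sub_zero, cyc_add_two_mul] at hBw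
    exact hBw ▸ hw
  obtain ⟨hB0, hB2m, hBS⟩ := Nat.find_spec hex
  obtain ⟨L, hg⟩ := exists_isGap hBS
  refine ⟨_, L, Nat.find hex, hg, hB0, ?_, by omega⟩
  by_contra! hLB
  have hend := hg.2.1
  rcases Nat.lt_or_ge (L + 1) (Nat.find hex) with hlt | hge
  · rw [show a + 2 * m - Nat.find hex + L + 1 = a + 2 * m - (Nat.find hex - (L + 1)) by omega]
      at hend
    exact Nat.find_min hex (by omega) ⟨by omega, by omega, hend⟩
  · rw [show a + 2 * m - Nat.find hex + L + 1 = a + 2 * m by omega, cyc_add_two_mul] at hend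
    exact ha hend

lemma IsGap.mem_pred_iff {s L B a : ℕ} (hg : IsGap m S s L) (hB : 0 < B) (hBL : B ≤ L)
    (hsB : s + B = a + 2 * m) : cyc m (a + 2 * m - 1) ∈ S ↔ B = 1 := by
  rw [← hsB, show s + B - 1 = s + (B - 1) by omega, hg.mem_iff (by omega)]
  omega

lemma IsGap.mem_succ_iff {s L B a : ℕ} (hg : IsGap m S s L) (hB : 0 < B) (hBL : B ≤ L)
    (hsB : s + B = a + 2 * m) : cyc m (a + 1) ∈ S ↔ B = L := by
  rw [← cyc_add_two_mul, show a + 1 + 2 * m = s + (B + 1) by omega, hg.mem_iff (by omega)]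
  omega

lemma succ_notMem_of_succ_eq_pred (hm : 3 ≤ m) (hS : S.Nonempty)
    (h3 : ∀ s L, IsGap m S s L → 2 ≤ L →
      (∀ L', IsGap m S (s + L + 1) L' → L' ≤ 1) ∧
      (∀ s' L', IsGap m S s' L' → (s' + L' + 1) % (2 * m) = s % (2 * m) → L' ≤ 1))
    {a b : ℕ} (ha : cyc m a ∉ S) (hb : cyc m b ∉ S)
    (hnb : ∀ w ∈ S, IsCycAdj (cyc m a) w ↔ IsCycAdj (cyc m b) w)
    (hab : cyc m (a + 1) = cyc m (b + 2 * m - 1)) : cyc m (a + 1) ∉ S := by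
  intro hmem
  have hb2 : (b : ZMod (2 * m)) = a + 2 := by
    rw [cyc_eq_cyc_iff, natCast_pred] at hab; push_cast at hab; linear_combination -hab
  have two_ne : (2 : ZMod (2 * m)) ≠ 0 := by
    exact_mod_cast natCast_ne_zero (k := 2) (by omega) (by omega)
  have four_ne : (4 : ZMod (2 * m)) ≠ 0 := by
    exact_mod_cast natCast_ne_zero (k := 4) (by omega) (by omega)
  -- `b = a + 2`, and each of the outer neighbours `a - 1`, `a + 3 = b + 1` is a cycle
  -- neighbour of only one of `a`, `b`; hence neither lies in `S`.
  have hpred : cyc m (a + 2 * m - 1) ∉ S := by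
    intro h
    have := (hnb _ h).1 (isCycAdj_cyc_iff.2 (Or.inr rfl))
    rw [isCycAdj_cyc_iff, cyc_eq_cyc_iff, cyc_eq_cyc_iff, natCast_pred, natCast_pred] at this
    push_cast at this
    rcases this with h' | h'
    · exact four_ne (by linear_combination -h' - hb2)
    · exact two_ne (by linear_combination -h' - hb2)
  have hsucc : cyc m (a + 3) ∉ S := by
    intro h
    have hb1 : cyc m (a + 3) = cyc m (b + 1) := by rw [cyc_eq_cyc_iff]; push_cast; rw [hb2]; ring
    have := (hnb _ h).2 (isCycAdj_cyc_iff.2 (Or.inl hb1))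
    rw [isCycAdj_cyc_iff, cyc_eq_cyc_iff, cyc_eq_cyc_iff, natCast_pred] at this
    push_cast at this
    rcases this with h' | h'
    · exact two_ne (by linear_combination h')
    · exact four_ne (by linear_combination h')
  have ha2 : cyc m (a + 2) ∉ S := by rwa [cyc_eq_cyc_iff.2 (by push_cast; rw [hb2])]
  obtain ⟨s, L, B, hg, hB0, hBL, hsB⟩ := exists_isGap_through hS ha
  obtain ⟨s', L', B', hg', hB'0, hB'L, hsB'⟩ := exists_isGap_through hS ha2
  have hBL : B = L := (hg.mem_succ_iff hB0 hBL hsB).1 hmem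
  have hB1 : B ≠ 1 := fun h => hpred ((hg.mem_pred_iff hB0 hBL.le hsB).2 h)
  have hB'1 : B' = 1 := (hg'.mem_pred_iff hB'0 hB'L hsB').1 <| by
    rwa [show a + 2 + 2 * m - 1 = a + 1 + 2 * m by omega, cyc_add_two_mul]
  have hB'L' : B' ≠ L' := fun h => hsucc ((hg'.mem_succ_iff hB'0 hB'L hsB').2 h)
  have := (h3 s' L' hg' (by omega)).2 s L hg (by rw [show s + L + 1 = s' by omega])
  omega

def IsInnerGapVertex (m : ℕ) [NeZero m] (S : Set (Fin m ⊕ Fin m)) (a : ℕ) : Prop :=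
  ∃ s L B, IsGap m S s L ∧ 2 ≤ B ∧ B < L ∧ cyc m a = cyc m (s + B)

lemma isInnerGapVertex_of_forall_not_isCycAdj (hS : S.Nonempty) {a : ℕ} (ha : cyc m a ∉ S)
    (hnbr : ∀ w ∈ S, ¬ IsCycAdj (cyc m a) w) : IsInnerGapVertex m S a := by
  obtain ⟨s, L, B, hg, hB0, hBL, hsB⟩ := exists_isGap_through hS ha
  have hB1 : B ≠ 1 := fun h =>
    hnbr _ ((hg.mem_pred_iff hB0 hBL hsB).2 h) (isCycAdj_cyc_iff.2 (Or.inr rfl))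
  have hBL' : B ≠ L := fun h =>
    hnbr _ ((hg.mem_succ_iff hB0 hBL hsB).2 h) (isCycAdj_cyc_iff.2 (Or.inl rfl))
  exact ⟨s, L, B, hg, by omega, by omega, by rw [hsB, cyc_add_two_mul]⟩

lemma cyc_eq_of_isInnerGapVertex
    (h1 : ∀ s L, IsGap m S s L → L ≤ 4)
    (h2 : ∀ s₁ s₂, IsGap m S s₁ 4 → IsGap m S s₂ 4 → s₁ % (2 * m) = s₂ % (2 * m))
    (h4 : ∀ s₁ s₂, IsGap m S s₁ 3 → IsGap m S s₂ 3 → s₁ % (2 * m) ≠ s₂ % (2 * m) →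
      (cyc m (s₁ + 2)).isLeft ≠ (cyc m (s₂ + 2)).isLeft)
    (h5 : ¬ ∃ s₁ s₂ : ℕ, IsGap m S s₁ 3 ∧ IsGap m S s₂ 4)
    {a b : ℕ} (hpart : (cyc m a).isLeft = (cyc m b).isLeft)
    (ha : IsInnerGapVertex m S a) (hb : IsInnerGapVertex m S b) : cyc m a = cyc m b := by
  obtain ⟨s, L, B, hg, hB2, hBL, ha⟩ := ha
  obtain ⟨s', L', B', hg', hB'2, hB'L, hb⟩ := hb
  have hL := h1 _ _ hg
  have hL' := h1 _ _ hg'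
  rw [ha, hb] at hpart ⊢
  obtain rfl | rfl : L = 3 ∨ L = 4 := by omega
  all_goals obtain rfl | rfl : L' = 3 ∨ L' = 4 := by omega
  · obtain rfl : B = 2 := by omega
    obtain rfl : B' = 2 := by omega
    by_cases hss : s ≡ s' [MOD 2 * m]
    · exact cyc_add_congr (cyc_eq_cyc_iff_modEq.2 hss) 2
    · exact absurd hpart (h4 s s' hg hg' hss)
  · exact (h5 ⟨s, s', hg, hg'⟩).elim
  · exact (h5 ⟨s', s, hg', hg⟩).elim
  · rw [cyc_add_congr (cyc_eq_cyc_iff_modEq.2 (h2 s s' hg hg'))] at hpart ⊢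
    obtain rfl | rfl : B = 2 ∨ B = 3 := by omega
    all_goals obtain rfl | rfl : B' = 2 ∨ B' = 3 := by omega
    all_goals first
      | rfl
      | have hpar : (cyc m (s' + 3)).isLeft = !(cyc m (s' + 2)).isLeft :=
          isLeft_cyc_succ (s' + 2)
        rw [hpar] at hpart
        exact absurd hpart (by cases (cyc m (s' + 2)).isLeft <;> decide)

lemma eq_of_isCycAdj_iff (hm : 3 ≤ m) (hS : S.Nonempty)
    (h1 : ∀ s L, IsGap m S s L → L ≤ 4)
    (h2 : ∀ s₁ s₂, IsGap m S s₁ 4 → IsGap m S s₂ 4 → s₁ % (2 * m) = s₂ % (2 * m))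
    (h3 : ∀ s L, IsGap m S s L → 2 ≤ L →
      (∀ L', IsGap m S (s + L + 1) L' → L' ≤ 1) ∧
      (∀ s' L', IsGap m S s' L' → (s' + L' + 1) % (2 * m) = s % (2 * m) → L' ≤ 1))
    (h4 : ∀ s₁ s₂, IsGap m S s₁ 3 → IsGap m S s₂ 3 → s₁ % (2 * m) ≠ s₂ % (2 * m) →
      (cyc m (s₁ + 2)).isLeft ≠ (cyc m (s₂ + 2)).isLeft)
    (h5 : ¬ ∃ s₁ s₂ : ℕ, IsGap m S s₁ 3 ∧ IsGap m S s₂ 4)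
    {u v : Fin m ⊕ Fin m} (hpart : u.isLeft = v.isLeft) (hu : u ∉ S) (hv : v ∉ S)
    (hnb : ∀ w ∈ S, IsCycAdj u w ↔ IsCycAdj v w) : u = v := by
  obtain ⟨a, rfl⟩ : ∃ a, cyc m a = u := ⟨_, cyc_cycPos u⟩
  obtain ⟨b, rfl⟩ : ∃ b, cyc m b = v := ⟨_, cyc_cycPos v⟩
  by_cases hadj : ∃ w ∈ S, IsCycAdj (cyc m a) w
  · obtain ⟨w, hw, hwa⟩ := hadj
    have hwb := (hnb w hw).1 hwa
    rw [isCycAdj_cyc_iff] at hwa hwb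
    rcases hwa with rfl | rfl <;> rcases hwb with hwb | hwb
    · rw [cyc_eq_cyc_iff] at hwb ⊢
      push_cast at hwb
      exact add_right_cancel hwb
    · exact absurd hw (succ_notMem_of_succ_eq_pred hm hS h3 hu hv hnb hwb)
    · exact absurd (hwb ▸ hw) (succ_notMem_of_succ_eq_pred hm hS h3 hv hu
        (fun w hw => (hnb w hw).symm) hwb.symm)
    · rwa [cyc_eq_cyc_iff, natCast_pred, natCast_pred, sub_left_inj, ← cyc_eq_cyc_iff] at hwb
  · push Not at hadj
    refine cyc_eq_of_isInnerGapVertex h1 h2 h4 h5 hpart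
      (isInnerGapVertex_of_forall_not_isCycAdj hS hu hadj)
      (isInnerGapVertex_of_forall_not_isCycAdj hS hv
        fun w hw h => hadj w hw ((hnb w hw).2 h))

end

/-- for `m ≥ 5`, any set `S` of at least two vertices of
`K_{m,m} \ E(C_{2m})` satisfying the five gap conditions (i)–(v) is a
resolving set. -/
theorem stmt12 (m : ℕ) [NeZero m] (hm : 5 ≤ m) (S : Set (Fin m ⊕ Fin m))
    (hcard : 2 ≤ S.ncard)
    -- (i) every gap has at most 4 vertices
    (h1 : ∀ s L, IsGap m S s L → L ≤ 4)
    -- (ii) at most one gap has 4 vertices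
    (h2 : ∀ s₁ s₂, IsGap m S s₁ 4 → IsGap m S s₂ 4 → s₁ % (2 * m) = s₂ % (2 * m))
    -- (iii) a gap with at least 2 vertices has both neighboring gaps of size ≤ 1
    (h3 : ∀ s L, IsGap m S s L → 2 ≤ L →
      (∀ L', IsGap m S (s + L + 1) L' → L' ≤ 1) ∧
      (∀ s' L', IsGap m S s' L' → (s' + L' + 1) % (2 * m) = s % (2 * m) → L' ≤ 1))
    -- (iv) two gaps of exactly 3 vertices have middle vertices in different parts
    (h4 : ∀ s₁ s₂, IsGap m S s₁ 3 → IsGap m S s₂ 3 → s₁ % (2 * m) ≠ s₂ % (2 * m) →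
      (cyc m (s₁ + 2)).isLeft ≠ (cyc m (s₂ + 2)).isLeft)
    -- (v) not both a 3-gap and a 4-gap occur
    (h5 : ¬ ∃ s₁ s₂ : ℕ, IsGap m S s₁ 3 ∧ IsGap m S s₂ 4) :
    Resolves (cycGraph m) S := by
  have hS : S.Nonempty := Set.nonempty_of_ncard_ne_zero (by omega)
  have hconn := cycGraph_connected hm
  intro u v huv
  have hpart := isLeft_eq_of_dist_eq hconn (huv _ hS.some_mem)
  by_cases hu : u ∈ S
  · exact ((hconn v u).dist_eq_zero_iff.1 (by rw [← huv u hu, SimpleGraph.dist_self])).symm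
  by_cases hv : v ∈ S
  · exact (hconn u v).dist_eq_zero_iff.1 (by rw [huv v hv, SimpleGraph.dist_self])
  exact eq_of_isCycAdj_iff (by omega) hS h1 h2 h3 h4 h5 hpart hu hv fun w hw =>
    isCycAdj_iff_of_dist_eq hpart (huv w hw)
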